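/- arXiv:1809.09588 — 3 statements merged into one kernel-verified Lean document; each statement's English description precedes it below -/
import Mathlib

section
/- Let (Ω, F, P) be a probability space, F = F_T, and let (τ_n) be stopping times with τ_n ↗ ∞ P-a.s. Let Qⁿ be probability measures on F with Qⁿ = Q^m on F_{τ_n} ∩ F for n ≤ m, and let Q be a finitely additive set function on F with Q = Qⁿ on F_{τ_n} for each n, Q(Ω) = 1, and Q(A) = 0 whenever P(A) = 0. Then Q is countably additive if and only if limsup_{n→∞} Qⁿ(τ_n > T) = 1. -/
/-!
Let `Gₙ = {τₙ > T}`. For every `B ∈ F = F_T` the set `B ∩ Gₙ` lies in `F_{τₙ}`, so on the trace of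
`F` on `Gₙ` the finitely additive `Q` coincides with the measure `Qⁿ`, while
`Q(Gₙᶜ) = 1 - Qⁿ(Gₙ)`. If `Q` is continuous at `∅`: since `P`-a.e. `ω` eventually lies in `Gₙ`, the
sets `⋃_{k ≥ n} Gₖᶜ` decrease to a `P`-null, hence `Q`-null, set, so `Q(Gₙᶜ) → 0` and
`Qⁿ(Gₙ) → 1`. Conversely, if the limsup is `1`, pick `n` with `Q(Gₙᶜ) < ε`; for `E_k ↓ ∅` we get
`Q(E_k) ≤ Qⁿ(E_k) + Q(Gₙᶜ)`, and `Qⁿ(E_k) → 0` by countable additivity of `Qⁿ`.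
-/

open MeasureTheory Filter Set
open scoped ENNReal NNReal Topology

theorem MeasureTheory.IsStoppingTime.measurableSet_inter_const_lt {Ω ι : Type*}
    {m : MeasurableSpace Ω} [LinearOrder ι] {f : Filtration ι m} {τ : Ω → WithTop ι}
    (hτ : IsStoppingTime f τ)
    {s : Set Ω} {i : ι} (hs : MeasurableSet[f i] s) :
    MeasurableSet[hτ.measurableSpace] (s ∩ {ω | (i : WithTop ι) < τ ω}) := by
  have hgt : {ω | (i : WithTop ι) < τ ω} = {ω | τ ω ≤ i}ᶜ := by ext; simp
  refine ⟨le_iSup f i _ (hgt ▸ hs.inter (hτ i).compl), fun j => ?_⟩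
  rcases le_or_gt j i with hji | hij
  · convert @MeasurableSet.empty _ (f j)
    ext ω
    simp only [mem_inter_iff, mem_ofPred_eq, mem_empty_iff_false, iff_false, not_and, not_le]
    exact fun h => (WithTop.coe_le_coe.2 hji).trans_lt h.2
  · rw [hgt, inter_assoc, ← sdiff_eq_compl_inter]
    exact (f.mono hij.le _ hs).inter ((hτ j).diff (f.mono hij.le _ (hτ i)))

section FinitelyAdditive

variable {Ω : Type*} [MeasurableSpace Ω]

def IsFinitelyAdditive (Q : Set Ω → ℝ) : Prop :=
  ∀ A B : Set Ω, MeasurableSet A → MeasurableSet B → Disjoint A B → Q (A ∪ B) = Q A + Q B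

def ContinuousAtEmpty (Q : Set Ω → ℝ) : Prop :=
  ∀ E : ℕ → Set Ω, (∀ k, MeasurableSet (E k)) → Antitone E → (⋂ k, E k) = ∅ →
    Tendsto (fun k => Q (E k)) atTop (𝓝 0)

namespace IsFinitelyAdditive

variable {Q : Set Ω → ℝ} (hQ : IsFinitelyAdditive Q) {s t : Set Ω}
include hQ

theorem eq_add_diff (hs : MeasurableSet s) (ht : MeasurableSet t) (hst : s ⊆ t) :
    Q t = Q s + Q (t \ s) := by
  rw [← hQ s (t \ s) hs (ht.diff hs) disjoint_sdiff_right, union_sdiff_cancel hst]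

theorem mono (hpos : ∀ s, MeasurableSet s → 0 ≤ Q s) (hs : MeasurableSet s)
    (ht : MeasurableSet t) (hst : s ⊆ t) : Q s ≤ Q t := by
  rw [hQ.eq_add_diff hs ht hst]
  linarith [hpos _ (ht.diff hs)]

theorem compl (hs : MeasurableSet s) : Q sᶜ = Q univ - Q s := by
  rw [hQ.eq_add_diff hs MeasurableSet.univ (subset_univ s), compl_eq_univ_sdiff]
  ring

theorem tendsto_zero_of_ae_eventually_notMem (hpos : ∀ s, MeasurableSet s → 0 ≤ Q s)
    (hcont : ContinuousAtEmpty Q) (P : Measure Ω)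
    (hac : ∀ s, MeasurableSet s → P s = 0 → Q s = 0) {A : ℕ → Set Ω}
    (hA : ∀ n, MeasurableSet (A n)) (hAe : ∀ᵐ ω ∂P, ∀ᶠ n in atTop, ω ∉ A n) :
    Tendsto (fun n => Q (A n)) atTop (𝓝 0) := by
  set B : ℕ → Set Ω := fun n => ⋃ k ≥ n, A k
  set N := ⋂ n, B n
  have hB : ∀ n, MeasurableSet (B n) := fun n => .biUnion (to_countable _) fun k _ => hA k
  have hN : MeasurableSet N := .iInter hB
  have hBanti : Antitone B := fun n n' h => biUnion_subset_biUnion_left fun k hk => h.trans hk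
  have hQN : Q N = 0 := by
    refine hac N hN (measure_mono_null (fun ω hω => ?_) (ae_iff.1 hAe))
    simp only [N, B, mem_iInter, mem_iUnion, exists_prop] at hω
    simpa [not_eventually, frequently_atTop] using hω
  have hQB : Tendsto (fun n => Q (B n)) atTop (𝓝 0) := by
    have hQBN : ∀ n, Q (B n) = Q (B n \ N) := fun n => by
      rw [hQ.eq_add_diff hN (hB n) (iInter_subset B n), hQN, zero_add]
    simp only [hQBN]
    refine hcont _ (fun n => (hB n).diff hN) (fun n n' h => sdiff_subset_sdiff_left (hBanti h)) ?_
    simp only [sdiff_eq]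
    rw [← iInter_inter, inter_compl_self]
  refine tendsto_of_tendsto_of_tendsto_of_le_of_le tendsto_const_nhds hQB
    (fun n => hpos _ (hA n)) fun n => hQ.mono hpos (hA n) (hB n) ?_
  exact subset_biUnion_of_mem (u := A) (le_refl n)

theorem continuousAtEmpty_of_forall_exists_lt (hpos : ∀ s, MeasurableSet s → 0 ≤ Q s)
    {G : ℕ → Set Ω} (hG : ∀ n, MeasurableSet (G n)) (μ : ℕ → Measure Ω)
    [∀ n, IsFiniteMeasure (μ n)]
    (hμ : ∀ n E, MeasurableSet E → Q (E ∩ G n) = (μ n (E ∩ G n)).toReal)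
    (hsmall : ∀ ε > 0, ∃ n, Q (G n)ᶜ < ε) : ContinuousAtEmpty Q := by
  intro E hE hEanti hEempty
  refine tendsto_order.2
    ⟨fun a ha => .of_forall fun k => ha.trans_le (hpos _ (hE k)), fun ε hε => ?_⟩
  obtain ⟨n, hn⟩ := hsmall (ε / 2) (half_pos hε)
  have hμE : Tendsto (fun k => (μ n (E k)).toReal) atTop (𝓝 0) := by
    have := tendsto_measure_iInter_atTop (μ := μ n) (fun k => (hE k).nullMeasurableSet) hEanti
      ⟨0, measure_ne_top _ _⟩
    rw [hEempty, measure_empty] at this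
    exact (ENNReal.tendsto_toReal ENNReal.zero_ne_top).comp this
  filter_upwards [hμE.eventually_lt_const (half_pos hε)] with k hk
  have hsplit : Q (E k) = Q (E k ∩ G n) + Q (E k ∩ (G n)ᶜ) := by
    conv_lhs => rw [← inter_union_compl (E k) (G n)]
    exact hQ _ _ ((hE k).inter (hG n)) ((hE k).inter (hG n).compl)
      (disjoint_compl_right.mono inter_subset_right inter_subset_right)
  calc Q (E k) = (μ n (E k ∩ G n)).toReal + Q (E k ∩ (G n)ᶜ) := by rw [hsplit, hμ n _ (hE k)]
    _ ≤ (μ n (E k)).toReal + Q (G n)ᶜ := by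
      gcongr
      · exact measure_ne_top _ _
      · exact inter_subset_left
      · exact hQ.mono hpos ((hE k).inter (hG n).compl) (hG n).compl inter_subset_right
    _ < ε := by linarith

end IsFinitelyAdditive

end FinitelyAdditive

theorem stmt2_general {Ω : Type*} {m : MeasurableSpace Ω}
    (P : Measure Ω)
    (ℱ : Filtration ℝ≥0∞ m) (T : ℝ≥0∞) (hT : T ≠ ⊤)
    -- `F = F_T`
    (hFT : ∀ s : Set Ω, MeasurableSet s → MeasurableSet[ℱ T] s)
    (τ : ℕ → Ω → ℝ≥0∞) (hτ : ∀ n, IsStoppingTime ℱ (fun ω => ((τ n ω : ℝ≥0∞) : WithTop ℝ≥0∞)))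
    -- `τ_n ↗ ∞` P-a.s.
    (hτ_lim : ∀ᵐ ω ∂P, Tendsto (fun n => τ n ω) atTop (nhds ⊤))
    (Qn : ℕ → Measure Ω) (hQn : ∀ n, IsProbabilityMeasure (Qn n))
    (Q : Set Ω → ℝ)
    -- finite additivity, positivity, normalization
    (hadd : ∀ A B : Set Ω, MeasurableSet A → MeasurableSet B → Disjoint A B →
      Q (A ∪ B) = Q A + Q B)
    (hpos : ∀ A : Set Ω, MeasurableSet A → 0 ≤ Q A)
    (hone : Q Set.univ = 1)
    -- `Q = Qⁿ` on `F_{τ_n}`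
    (hagree : ∀ n, ∀ A : Set Ω, MeasurableSet[(hτ n).measurableSpace] A →
      Q A = (Qn n A).toReal)
    -- `Q(A) = 0` whenever `P(A) = 0`
    (hac : ∀ A : Set Ω, MeasurableSet A → P A = 0 → Q A = 0) :
    -- countable additivity ⟺ continuity at ∅ ⟺ limsup_n Qⁿ(τ_n > T) = 1
    (∀ E : ℕ → Set Ω, (∀ k, MeasurableSet (E k)) → Antitone E → (⋂ k, E k) = ∅ →
        Tendsto (fun k => Q (E k)) atTop (nhds 0)) ↔
      Filter.limsup (fun n => (Qn n {ω | T < τ n ω}).toReal) atTop = 1 := by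
  have hQ : IsFinitelyAdditive Q := hadd
  set G : ℕ → Set Ω := fun n => {ω | T < τ n ω}
  have hGτ n E (hE : MeasurableSet E) : MeasurableSet[(hτ n).measurableSpace] (E ∩ G n) := by
    simpa [G] using (hτ n).measurableSet_inter_const_lt (hFT E hE)
  have hG n : MeasurableSet (G n) := by
    simpa using (hτ n).measurableSpace_le _ (hGτ n univ .univ)
  have hQG n : (Qn n (G n)).toReal = Q (G n) := by
    simpa using (hagree n _ (hGτ n univ .univ)).symm
  have hQGc n : Q (G n)ᶜ = 1 - Q (G n) := by rw [hQ.compl (hG n), hone]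
  change ContinuousAtEmpty Q ↔ limsup (fun n => (Qn n (G n)).toReal) atTop = 1
  simp only [hQG]
  constructor
  · intro hcont
    have hAe : ∀ᵐ ω ∂P, ∀ᶠ n in atTop, ω ∉ (G n)ᶜ := by
      filter_upwards [hτ_lim] with ω hω
      simpa [G] using hω.eventually (Ioi_mem_nhds hT.lt_top)
    have := (hQ.tendsto_zero_of_ae_eventually_notMem hpos hcont P hac (fun n => (hG n).compl)
      hAe).const_sub 1
    simp only [hQGc, sub_sub_cancel, sub_zero] at this
    exact this.limsup_eq
  · intro hls
    refine hQ.continuousAtEmpty_of_forall_exists_lt hpos hG Qn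
      (fun n E hE => hagree n _ (hGτ n E hE)) fun ε hε => ?_
    have hcobdd : IsCoboundedUnder (· ≤ ·) atTop fun n => Q (G n) :=
      isCoboundedUnder_le_of_le atTop fun n => hpos _ (hG n)
    obtain ⟨n, hn⟩ := (frequently_lt_of_lt_limsup hcobdd (hls ▸ sub_lt_self 1 hε)).exists
    exact ⟨n, by linarith [hQGc n]⟩

/-- A finitely additive candidate WELMM `Q` agreeing with probability measures `Qⁿ` on the
stopping-time σ-fields `F_{τ_n}` is countably additive (equivalently: continuous at `∅`)
if and only if `limsup_n Qⁿ(τ_n > T) = 1`. -/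
theorem stmt2 {Ω : Type*} {m : MeasurableSpace Ω}
    (P : Measure Ω) [IsProbabilityMeasure P]
    (ℱ : Filtration ℝ≥0∞ m) (T : ℝ≥0∞) (hT : T ≠ ⊤)
    -- `F = F_T`
    (hFT : ∀ s : Set Ω, MeasurableSet s → MeasurableSet[ℱ T] s)
    (τ : ℕ → Ω → ℝ≥0∞) (hτ : ∀ n, IsStoppingTime ℱ (fun ω => ((τ n ω : ℝ≥0∞) : WithTop ℝ≥0∞)))
    -- `τ_n ↗ ∞` P-a.s.
    (hτ_mono : ∀ᵐ ω ∂P, Monotone fun n => τ n ω)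
    (hτ_lim : ∀ᵐ ω ∂P, Tendsto (fun n => τ n ω) atTop (nhds ⊤))
    (Qn : ℕ → Measure Ω) (hQn : ∀ n, IsProbabilityMeasure (Qn n))
    -- consistency: `Qⁿ = Q^m` on `F_{τ_n}` for `n ≤ m`
    (hcons : ∀ n k, n ≤ k → ∀ A : Set Ω,
      MeasurableSet[(hτ n).measurableSpace] A → Qn n A = Qn k A)
    (Q : Set Ω → ℝ)
    -- finite additivity, positivity, normalization
    (hadd : ∀ A B : Set Ω, MeasurableSet A → MeasurableSet B → Disjoint A B →
      Q (A ∪ B) = Q A + Q B)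
    (hpos : ∀ A : Set Ω, MeasurableSet A → 0 ≤ Q A)
    (hone : Q Set.univ = 1)
    -- `Q = Qⁿ` on `F_{τ_n}`
    (hagree : ∀ n, ∀ A : Set Ω, MeasurableSet[(hτ n).measurableSpace] A →
      Q A = (Qn n A).toReal)
    -- `Q(A) = 0` whenever `P(A) = 0`
    (hac : ∀ A : Set Ω, MeasurableSet A → P A = 0 → Q A = 0) :
    -- countable additivity ⟺ continuity at ∅ ⟺ limsup_n Qⁿ(τ_n > T) = 1
    (∀ E : ℕ → Set Ω, (∀ k, MeasurableSet (E k)) → Antitone E → (⋂ k, E k) = ∅ →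
        Tendsto (fun k => Q (E k)) atTop (nhds 0)) ↔
      Filter.limsup (fun n => (Qn n {ω | T < τ n ω}).toReal) atTop = 1 :=
  stmt2_general P ℱ T hT hFT τ hτ hτ_lim Qn hQn Q hadd hpos hone hagree hac
end

section
/- Let (Ω, F, P) be a probability space with F = F_T, let (τ_n) be stopping times with τ_n ↗ ∞ P-a.s., and let Q be a finitely additive set function on F with Q(Ω) = 1 that agrees on each F_{τ_n} with a probability measure Qⁿ equivalent to P on F_{τ_n}. If A ∈ F satisfies Q(A) = 0, then P(A) = 0. -/
open MeasureTheory Filter Set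
open scoped ENNReal NNReal

/-!
Localize along the stopping times. The set `A ∩ {T < τ_n}` lies in `F_{τ_n}`, and `Q` is
monotone, so `Q(A) = 0` forces `Qⁿ(A ∩ {T < τ_n}) = 0` and hence, by equivalence on `F_{τ_n}`,
`P(A ∩ {T < τ_n}) = 0`. Since `T < ∞ = lim τ_n` almost surely, these sets exhaust `A` up to a
`P`-null set.
-/

namespace MeasureTheory.IsStoppingTime

variable {Ω ι : Type*} {m : MeasurableSpace Ω} [LinearOrder ι] {f : Filtration ι m}
  {τ : Ω → WithTop ι}

theorem measurableSet_inter_lt (hτ : IsStoppingTime f τ) {s : Set Ω} {i : ι}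
    (hs : MeasurableSet[f i] s) : MeasurableSet[hτ.measurableSpace] (s ∩ {ω | i < τ ω}) := by
  refine ⟨le_iSup f i _ (hs.inter (hτ.measurableSet_gt i)), fun j => ?_⟩
  rcases le_total i j with hij | hji
  · exact ((f.mono hij _ hs).inter (f.mono hij _ (hτ.measurableSet_gt i))).inter (hτ j)
  · convert @MeasurableSet.empty _ (f j)
    ext ω
    simp only [mem_inter_iff, mem_ofPred_eq, mem_empty_iff_false, iff_false]
    rintro ⟨⟨-, hiτ⟩, hτj⟩
    exact (hiτ.trans_le (hτj.trans (WithTop.coe_le_coe.2 hji))).false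

end MeasureTheory.IsStoppingTime

theorem le_of_subset_of_additive {Ω : Type*} [MeasurableSpace Ω] {Q : Set Ω → ℝ}
    (hadd : ∀ A B : Set Ω, MeasurableSet A → MeasurableSet B → Disjoint A B →
      Q (A ∪ B) = Q A + Q B)
    (hpos : ∀ A : Set Ω, MeasurableSet A → 0 ≤ Q A)
    {A B : Set Ω} (hA : MeasurableSet A) (hB : MeasurableSet B) (hBA : B ⊆ A) :
    Q B ≤ Q A := by
  have hsplit := hadd B (A \ B) hB (hA.diff hB) disjoint_sdiff_right
  rw [union_sdiff_cancel hBA] at hsplit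
  linarith [hpos (A \ B) (hA.diff hB)]

theorem measure_eq_zero_of_forall_inter_lt_null {Ω : Type*} [MeasurableSpace Ω] {μ : Measure Ω}
    {τ : ℕ → Ω → ℝ≥0∞} (hτ_lim : ∀ᵐ ω ∂μ, Tendsto (fun n => τ n ω) atTop (nhds ⊤))
    {T : ℝ≥0∞} (hT : T ≠ ⊤) {A : Set Ω} (hnull : ∀ n, μ (A ∩ {ω | T < τ n ω}) = 0) :
    μ A = 0 := by
  refine measure_mono_null_ae ?_ (measure_iUnion_null hnull)
  filter_upwards [hτ_lim] with ω hω hωA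
  obtain ⟨n, hn⟩ := (hω.eventually_const_lt hT.lt_top).exists
  exact mem_iUnion.2 ⟨n, hωA, hn⟩

theorem stmt3_general {Ω : Type*} {m : MeasurableSpace Ω}
    (P : Measure Ω)
    (ℱ : Filtration ℝ≥0∞ m) (T : ℝ≥0∞) (hT : T ≠ ⊤)
    -- `F = F_T`
    (hFT : ∀ s : Set Ω, MeasurableSet s → MeasurableSet[ℱ T] s)
    (τ : ℕ → Ω → ℝ≥0∞) (hτ : ∀ n, IsStoppingTime ℱ (fun ω => (τ n ω : WithTop ℝ≥0∞)))
    (hτ_lim : ∀ᵐ ω ∂P, Tendsto (fun n => τ n ω) atTop (nhds ⊤))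
    (Qn : ℕ → Measure Ω) (hQn : ∀ n, IsProbabilityMeasure (Qn n))
    -- each `Qⁿ` is equivalent to `P` on `F_{τ_n}`
    (hequiv : ∀ n, ∀ A : Set Ω, MeasurableSet[(hτ n).measurableSpace] A →
      (Qn n A = 0 ↔ P A = 0))
    (Q : Set Ω → ℝ)
    -- finite additivity and normalization
    (hadd : ∀ A B : Set Ω, MeasurableSet A → MeasurableSet B → Disjoint A B →
      Q (A ∪ B) = Q A + Q B)
    (hpos : ∀ A : Set Ω, MeasurableSet A → 0 ≤ Q A)
    -- `Q = Qⁿ` on `F_{τ_n}`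
    (hagree : ∀ n, ∀ A : Set Ω, MeasurableSet[(hτ n).measurableSpace] A →
      Q A = (Qn n A).toReal)
    (A : Set Ω) (hA : MeasurableSet A) (hQA : Q A = 0) :
    P A = 0 := by
  refine measure_eq_zero_of_forall_inter_lt_null hτ_lim hT fun n => ?_
  have hS : MeasurableSet[(hτ n).measurableSpace] (A ∩ {ω | T < τ n ω}) := by
    simpa only [WithTop.coe_lt_coe] using (hτ n).measurableSet_inter_lt (hFT A hA)
  have hSm := (hτ n).measurableSpace_le _ hS
  have hQS : Q (A ∩ {ω | T < τ n ω}) = 0 :=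
    le_antisymm (hQA ▸ le_of_subset_of_additive hadd hpos hA hSm inter_subset_left) (hpos _ hSm)
  rw [hagree n _ hS, ENNReal.toReal_eq_zero_iff] at hQS
  exact (hequiv n _ hS).1 (hQS.resolve_right (measure_ne_top _ _))

/-- A finitely additive weakly equivalent local martingale measure `Q`, agreeing on each
`F_{τ_n}` with a probability measure `Qⁿ` equivalent to `P` on `F_{τ_n}`, has the same
null sets as `P`: if `Q(A) = 0` for `A ∈ F = F_T`, then `P(A) = 0`. -/
theorem stmt3 {Ω : Type*} {m : MeasurableSpace Ω}
    (P : Measure Ω) [IsProbabilityMeasure P]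
    (ℱ : Filtration ℝ≥0∞ m) (T : ℝ≥0∞) (hT : T ≠ ⊤)
    -- `F = F_T`
    (hFT : ∀ s : Set Ω, MeasurableSet s → MeasurableSet[ℱ T] s)
    (τ : ℕ → Ω → ℝ≥0∞) (hτ : ∀ n, IsStoppingTime ℱ (fun ω => (τ n ω : WithTop ℝ≥0∞)))
    -- `τ_n ↗ ∞` P-a.s.
    (hτ_mono : ∀ᵐ ω ∂P, Monotone fun n => τ n ω)
    (hτ_lim : ∀ᵐ ω ∂P, Tendsto (fun n => τ n ω) atTop (nhds ⊤))
    (Qn : ℕ → Measure Ω) (hQn : ∀ n, IsProbabilityMeasure (Qn n))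
    -- each `Qⁿ` is equivalent to `P` on `F_{τ_n}`
    (hequiv : ∀ n, ∀ A : Set Ω, MeasurableSet[(hτ n).measurableSpace] A →
      (Qn n A = 0 ↔ P A = 0))
    (Q : Set Ω → ℝ)
    -- finite additivity and normalization
    (hadd : ∀ A B : Set Ω, MeasurableSet A → MeasurableSet B → Disjoint A B →
      Q (A ∪ B) = Q A + Q B)
    (hpos : ∀ A : Set Ω, MeasurableSet A → 0 ≤ Q A)
    (hone : Q Set.univ = 1)
    -- `Q = Qⁿ` on `F_{τ_n}`
    (hagree : ∀ n, ∀ A : Set Ω, MeasurableSet[(hτ n).measurableSpace] A →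
      Q A = (Qn n A).toReal)
    (A : Set Ω) (hA : MeasurableSet A) (hQA : Q A = 0) :
    P A = 0 :=
  stmt3_general P ℱ T hT hFT τ hτ hτ_lim Qn hQn hequiv Q hadd hpos hagree A hA hQA
end

section
/- Let ξ be a continuous-time irreducible Markov chain on a countable state space J = {1,…,N}, defined on [0,T], with only finitely many jumps on [0,T] almost surely, and let S be a continuous semimartingale with local time L^S. Let c, σ : I × J → ℝ be Borel with σ never zero and (c(·,j)/σ(·,j))² locally integrable on the open interval I for each j, and suppose S takes values in I. Then almost surely ∫₀^T c²(S_s, ξ_s) ds < ∞. -/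
open MeasureTheory Filter Set
open scoped ENNReal NNReal

/-!
Let `K` be the range of `S` on `[0,T]` and `F` the finite set of regimes visited. `K` is a compact
subset of `I`, so each `(c(·,j)/σ(·,j))²`, `j ∈ F`, has a measurable majorant on `K` with finite
integral; let `G` be their sum, restricted to `K`. Since `σ ≠ 0` on `I`,
`c²(S_s, ξ_s) ≤ G(S_s) σ²(S_s, ξ_s)` for `s ∈ [0,T]`, and the occupation times formula turns the
integral of the right-hand side into `∫ G(x) 2 L_T(x) dx`, which is finite because `L_T` is bounded.
-/

namespace MeasureTheory

variable {α β : Type*} {mα : MeasurableSpace α} {mβ : MeasurableSpace β}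

/-- With `μ = ds` on `[0,T]`, `X = S`, `w = σ²(S, ξ)` (so `w · μ = d[S,S]`) and `ℓ = 2 L_T`, this is
the occupation times formula. -/
def IsOccupationDensity (μ : Measure α) (X : α → β) (w : α → ℝ≥0∞) (ν : Measure β)
    (ℓ : β → ℝ≥0∞) : Prop :=
  ∀ g : β → ℝ≥0∞, Measurable g → ∫⁻ a, g (X a) * w a ∂μ = ∫⁻ y, g y * ℓ y ∂ν

theorem IsOccupationDensity.lintegral_lt_top_of_ae_le {μ : Measure α} {X : α → β}
    {w : α → ℝ≥0∞} {ν : Measure β} {ℓ : β → ℝ≥0∞} (hocc : IsOccupationDensity μ X w ν ℓ)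
    {C : ℝ≥0∞} (hC : C ≠ ∞) (hℓ : ∀ y, ℓ y ≤ C) {G : β → ℝ≥0∞} (hG : Measurable G)
    (hG_fin : ∫⁻ y, G y ∂ν < ∞) {f : α → ℝ≥0∞} (hf : ∀ᵐ a ∂μ, f a ≤ G (X a) * w a) :
    ∫⁻ a, f a ∂μ < ∞ :=
  calc ∫⁻ a, f a ∂μ ≤ ∫⁻ a, G (X a) * w a ∂μ := lintegral_mono_ae hf
    _ = ∫⁻ y, G y * ℓ y ∂ν := hocc G hG
    _ ≤ ∫⁻ y, G y * C ∂ν := lintegral_mono fun y => by gcongr; exact hℓ y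
    _ = (∫⁻ y, G y ∂ν) * C := lintegral_mul_const' _ _ hC
    _ < ∞ := ENNReal.mul_lt_top hG_fin hC.lt_top

theorem AEMeasurable.exists_measurable_ge_lintegral_eq {μ : Measure α} {f : α → ℝ≥0∞}
    (hf : AEMeasurable f μ) :
    ∃ g : α → ℝ≥0∞, Measurable g ∧ f ≤ g ∧ ∫⁻ a, g a ∂μ = ∫⁻ a, f a ∂μ := by
  classical
  set N := toMeasurable μ {a | f a ≠ hf.mk f a}
  have hN : μ N = 0 := by rw [measure_toMeasurable]; exact hf.ae_eq_mk
  refine ⟨N.piecewise ⊤ (hf.mk f),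
    Measurable.piecewise (measurableSet_toMeasurable μ _) measurable_const hf.measurable_mk, ?_, ?_⟩
  · intro a
    by_cases ha : a ∈ N
    · simp [ha]
    · have : f a = hf.mk f a := not_not.1 fun h => ha (subset_toMeasurable _ _ h)
      simp [ha, this]
  · refine lintegral_congr_ae ?_
    filter_upwards [measure_eq_zero_iff_ae_notMem.1 hN, hf.ae_eq_mk] with a ha hfa
    simp [ha, hfa]

theorem exists_measurable_forall_le_lintegral_lt_top {ι : Type*} {μ : Measure α} {s : Set α}
    (hs : MeasurableSet s) (F : Finset ι) {h : ι → α → ℝ≥0∞}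
    (hm : ∀ i ∈ F, AEMeasurable (h i) (μ.restrict s))
    (hfin : ∀ i ∈ F, ∫⁻ a in s, h i a ∂μ < ∞) :
    ∃ G : α → ℝ≥0∞, Measurable G ∧ (∀ i ∈ F, ∀ a ∈ s, h i a ≤ G a) ∧ ∫⁻ a, G a ∂μ < ∞ := by
  choose! g hgm hle hgint using fun i hi => (hm i hi).exists_measurable_ge_lintegral_eq
  refine ⟨s.indicator fun a => ∑ i ∈ F, g i a,
    (Finset.measurable_sum F hgm).indicator hs, fun i hi a ha => ?_, ?_⟩
  · rw [indicator_of_mem ha]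
    exact (hle i hi a).trans (Finset.single_le_sum (f := (g · a)) (fun j _ => zero_le) hi)
  · rw [lintegral_indicator hs, lintegral_finsetSum _ hgm]
    exact ENNReal.sum_lt_top.2 fun i hi => (hgint i hi).trans_lt (hfin i hi)

end MeasureTheory

theorem ENNReal.ofReal_sq_eq_ofReal_div_sq_mul {a b : ℝ} (hb : b ≠ 0) :
    ENNReal.ofReal (a ^ 2) = ENNReal.ofReal ((a / b) ^ 2) * ENNReal.ofReal (b ^ 2) := by
  rw [← ENNReal.ofReal_mul (sq_nonneg _), div_pow, div_mul_cancel₀ _ (pow_ne_zero 2 hb)]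

theorem stmt9_general {Ω J : Type*} {m : MeasurableSpace Ω}
    (P : Measure Ω)
    (l r T : ℝ)
    (S : ℝ → Ω → ℝ) (ξ : ℝ → Ω → J)
    (c σ : ℝ → J → ℝ)
    (hσ : ∀ x ∈ Set.Ioo l r, ∀ j : J, σ x j ≠ 0)
    (hloc : ∀ j : J, ∀ K : Set ℝ, IsCompact K → K ⊆ Set.Ioo l r →
      IntegrableOn (fun x => (c x j / σ x j) ^ 2) K volume)
    (hSval : ∀ᵐ ω ∂P, ∀ t ∈ Set.Icc 0 T, S t ω ∈ Set.Ioo l r)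
    (hScont : ∀ᵐ ω ∂P, ContinuousOn (fun t => S t ω) (Set.Icc 0 T))
    (hξfin : ∀ᵐ ω ∂P, Set.Finite ((fun s => ξ s ω) '' Set.Icc 0 T))
    -- local time of `S` on `[0,T]`: bounded and satisfying the occupation times formula
    (L : ℝ → Ω → ℝ≥0∞)
    (hLbd : ∀ᵐ ω ∂P, ∃ C : ℝ≥0∞, C ≠ ⊤ ∧ ∀ x, L x ω ≤ C)
    (hocc : ∀ᵐ ω ∂P, ∀ g : ℝ → ℝ≥0∞, Measurable g →
      ∫⁻ s in Set.Icc 0 T, g (S s ω) * ENNReal.ofReal ((σ (S s ω) (ξ s ω)) ^ 2) ∂volume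
        = ∫⁻ x, g x * (2 * L x ω) ∂volume) :
    ∀ᵐ ω ∂P, ∫⁻ s in Set.Icc 0 T, ENNReal.ofReal ((c (S s ω) (ξ s ω)) ^ 2) ∂volume < ⊤ := by
  filter_upwards [hSval, hScont, hξfin, hLbd, hocc] with ω hval hcont hfin ⟨C, hC, hLC⟩ hocc
  set K := (fun t => S t ω) '' Icc 0 T
  have hK : IsCompact K := isCompact_Icc.image_of_continuousOn hcont
  have hKI : K ⊆ Ioo l r := image_subset_iff.2 hval
  obtain ⟨G, hGm, hGle, hG_fin⟩ := exists_measurable_forall_le_lintegral_lt_top hK.measurableSet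
    hfin.toFinset (h := fun j x => ENNReal.ofReal ((c x j / σ x j) ^ 2))
    (fun j _ => (hloc j K hK hKI).aestronglyMeasurable.aemeasurable.ennreal_ofReal)
    (fun j _ => (hloc j K hK hKI).setLIntegral_lt_top)
  refine IsOccupationDensity.lintegral_lt_top_of_ae_le hocc (C := 2 * C) (by finiteness)
    (fun x => by gcongr; exact hLC x) hGm hG_fin
    ((ae_restrict_iff' measurableSet_Icc).2 (ae_of_all _ fun s hs => ?_))
  have hSK : S s ω ∈ K := mem_image_of_mem _ hs
  rw [ENNReal.ofReal_sq_eq_ofReal_div_sq_mul (hσ _ (hKI hSK) _)]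
  gcongr
  exact hGle _ (hfin.mem_toFinset.2 (mem_image_of_mem _ hs)) _ hSK

/-- Lemma 2.5 of the paper: if `S` is a continuous semimartingale with values in the open
interval `I = (l, r)` whose quadratic variation has the occupation density `L` (occupation
times formula with `d[S,S]_s = σ²(S_s, ξ_s) ds`), the regime process `ξ` visits only
finitely many states on `[0,T]` a.s., and `(c(·,j)/σ(·,j))²` is locally integrable on `I`
for every regime `j`, then almost surely `∫₀^T c²(S_s, ξ_s) ds < ∞`. -/
theorem stmt9 {Ω J : Type*} {m : MeasurableSpace Ω} [Countable J]
    (P : Measure Ω) [IsProbabilityMeasure P]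
    (l r T : ℝ) (hlr : l < r) (hT : 0 ≤ T)
    (S : ℝ → Ω → ℝ) (ξ : ℝ → Ω → J)
    (c σ : ℝ → J → ℝ)
    (hσ : ∀ x ∈ Set.Ioo l r, ∀ j : J, σ x j ≠ 0)
    (hloc : ∀ j : J, ∀ K : Set ℝ, IsCompact K → K ⊆ Set.Ioo l r →
      IntegrableOn (fun x => (c x j / σ x j) ^ 2) K volume)
    (hSval : ∀ᵐ ω ∂P, ∀ t ∈ Set.Icc 0 T, S t ω ∈ Set.Ioo l r)
    (hScont : ∀ᵐ ω ∂P, ContinuousOn (fun t => S t ω) (Set.Icc 0 T))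
    (hξfin : ∀ᵐ ω ∂P, Set.Finite ((fun s => ξ s ω) '' Set.Icc 0 T))
    -- local time of `S` on `[0,T]`: bounded and satisfying the occupation times formula
    (L : ℝ → Ω → ℝ≥0∞)
    (hLbd : ∀ᵐ ω ∂P, ∃ C : ℝ≥0∞, C ≠ ⊤ ∧ ∀ x, L x ω ≤ C)
    (hocc : ∀ᵐ ω ∂P, ∀ g : ℝ → ℝ≥0∞, Measurable g →
      ∫⁻ s in Set.Icc 0 T, g (S s ω) * ENNReal.ofReal ((σ (S s ω) (ξ s ω)) ^ 2) ∂volume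
        = ∫⁻ x, g x * (2 * L x ω) ∂volume) :
    ∀ᵐ ω ∂P, ∫⁻ s in Set.Icc 0 T, ENNReal.ofReal ((c (S s ω) (ξ s ω)) ^ 2) ∂volume < ⊤ :=
  stmt9_general (m := m) P l r T S ξ c σ hσ hloc hSval hScont hξfin L hLbd hocc
end
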